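/- arXiv:2605.18623 — 6 statements merged into one kernel-verified Lean document; each statement's English description precedes it below -/
import Mathlib

section
/- Let T be an α tree cut sparsifier for graph G, and let L' be an optimal solution to the leaf label selection problem on T with budget k (i.e., L' ⊆ leaves(T), |L'| ≤ k, maximizing Ψ̂_T). Then L' is an α-approximate solution to graph label selection on G: α · Ψ_G(L') ≥ Ψ_G(L*) for every L* ⊆ V with |L*| ≤ k. -/
open Finset

/-- Weight of the cut `(A, U \ A)` in the graph with vertex set `U` and edge weights `w`. -/
noncomputable def cutW {V : Type*} [DecidableEq V] (w : V → V → ℝ) (U A : Finset V) : ℝ :=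
  ∑ u ∈ A, ∑ v ∈ U \ A, w u v

/-- `λ_T(A,B)`: minimum weight of a cut separating `A` from `B`. -/
noncomputable def lamT {V : Type*} [Fintype V] [DecidableEq V] (w : V → V → ℝ)
    (A B : Finset V) : ℝ :=
  sInf {x | ∃ S : Finset V, A ⊆ S ∧ Disjoint S B ∧ x = cutW w Finset.univ S}

/-- `Ψ_G(L)` on the graph with vertex set `U`. -/
noncomputable def PsiG {V : Type*} [DecidableEq V] (w : V → V → ℝ) (U L : Finset V) : ℝ :=
  sInf {x | ∃ C : Finset V, C.Nonempty ∧ C ⊆ U \ L ∧ x = cutW w U C / C.card}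

/-- `Ψ̂_T(L)` on the tree with leaf set `leaves`. -/
noncomputable def PsiHatT {V : Type*} [Fintype V] [DecidableEq V] (w : V → V → ℝ)
    (leaves L : Finset V) : ℝ :=
  sInf {x | ∃ S : Finset V, S.Nonempty ∧ S ⊆ leaves \ L ∧
    x = lamT w S (leaves \ S) / S.card}

/-- if `T` is an `α` tree cut sparsifier of `G` and `L'` is an optimal solution
to leaf label selection on `T` with budget `k`, then `L'` is an `α`-approximate solution to
graph label selection on `G`: `α · Ψ_G(L') ≥ Ψ_G(L*)` for every `L* ⊆ V` with `|L*| ≤ k`. -/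
theorem stmt1 {V : Type*} [Fintype V] [DecidableEq V]
    (wG wT : V → V → ℝ) (leaves : Finset V) (α : ℝ) (k : ℕ)
    (hGnonneg : ∀ u v, 0 ≤ wG u v) (hGsymm : ∀ u v, wG u v = wG v u)
    (hTnonneg : ∀ u v, 0 ≤ wT u v) (hTsymm : ∀ u v, wT u v = wT v u)
    (hsparsifier : ∀ A ⊆ leaves,
      cutW wG leaves A ≤ lamT wT A (leaves \ A) ∧
      lamT wT A (leaves \ A) ≤ α * cutW wG leaves A)
    (L' : Finset V) (hL' : L' ⊆ leaves) (hL'card : L'.card ≤ k)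
    (hopt : ∀ L ⊆ leaves, L.card ≤ k → PsiHatT wT leaves L ≤ PsiHatT wT leaves L') :
    ∀ Lstar ⊆ leaves, Lstar.card ≤ k →
      PsiG wG leaves Lstar ≤ α * PsiG wG leaves L' := by
  -- basic nonnegativity facts
  have hcutG : ∀ A : Finset V, 0 ≤ cutW wG leaves A := fun A =>
    Finset.sum_nonneg fun u _ => Finset.sum_nonneg fun v _ => hGnonneg u v
  have hcutT : ∀ A : Finset V, 0 ≤ cutW wT Finset.univ A := fun A =>
    Finset.sum_nonneg fun u _ => Finset.sum_nonneg fun v _ => hTnonneg u v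
  have hlam : ∀ A B : Finset V, 0 ≤ lamT wT A B := by
    intro A B
    apply Real.sInf_nonneg
    rintro x ⟨S, -, -, rfl⟩
    exact hcutT S
  have hbddG : ∀ L : Finset V, BddBelow
      {x | ∃ C : Finset V, C.Nonempty ∧ C ⊆ leaves \ L ∧ x = cutW wG leaves C / C.card} := by
    intro L
    refine ⟨0, ?_⟩
    rintro x ⟨C, -, -, rfl⟩
    exact div_nonneg (hcutG C) (Nat.cast_nonneg _)
  have hbddT : ∀ L : Finset V, BddBelow
      {x | ∃ S : Finset V, S.Nonempty ∧ S ⊆ leaves \ L ∧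
        x = lamT wT S (leaves \ S) / S.card} := by
    intro L
    refine ⟨0, ?_⟩
    rintro x ⟨S, -, -, rfl⟩
    exact div_nonneg (hlam _ _) (Nat.cast_nonneg _)
  -- PsiG L ≤ elements
  have hPsiG_le : ∀ (L C : Finset V), C.Nonempty → C ⊆ leaves \ L →
      PsiG wG leaves L ≤ cutW wG leaves C / C.card := by
    intro L C h1 h2
    exact csInf_le (hbddG L) ⟨C, h1, h2, rfl⟩
  have hPsiT_le : ∀ (L S : Finset V), S.Nonempty → S ⊆ leaves \ L →
      PsiHatT wT leaves L ≤ lamT wT S (leaves \ S) / S.card := by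
    intro L S h1 h2
    exact csInf_le (hbddT L) ⟨S, h1, h2, rfl⟩
  -- Claim 1: Ψ_G(L) ≤ Ψ̂_T(L) when leaves \ L is nonempty
  have claim1 : ∀ L : Finset V, (leaves \ L).Nonempty →
      PsiG wG leaves L ≤ PsiHatT wT leaves L := by
    intro L hne
    unfold PsiHatT
    have hmem : lamT wT (leaves \ L) (leaves \ (leaves \ L)) / (leaves \ L).card ∈
        {x | ∃ S : Finset V, S.Nonempty ∧ S ⊆ leaves \ L ∧
          x = lamT wT S (leaves \ S) / S.card} :=
      ⟨leaves \ L, hne, Finset.Subset.refl _, rfl⟩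
    apply le_csInf ⟨_, hmem⟩
    rintro b ⟨S, hS, hsub, rfl⟩
    have hSl : S ⊆ leaves := hsub.trans (Finset.sdiff_subset)
    have hcard : (0 : ℝ) < S.card := by exact_mod_cast Finset.card_pos.mpr hS
    refine le_trans (hPsiG_le L S hS hsub) ?_
    exact div_le_div_of_nonneg_right ((hsparsifier S hSl).1) hcard.le
  -- Claim 2: Ψ̂_T(L) ≤ α·Ψ_G(L)
  have claim2 : ∀ L : Finset V, PsiHatT wT leaves L ≤ α * PsiG wG leaves L := by
    intro L
    by_cases hne : (leaves \ L).Nonempty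
    · by_cases hz : ∃ C : Finset V, C.Nonempty ∧ C ⊆ leaves \ L ∧ 0 < cutW wG leaves C
      · obtain ⟨C, hC, hsub, hpos⟩ := hz
        have hCl : C ⊆ leaves := hsub.trans Finset.sdiff_subset
        have hα : 0 ≤ α := by
          have h1 := (hsparsifier C hCl).2
          have h0 := hlam C (leaves \ C)
          nlinarith
        rcases hα.lt_or_eq with hαpos | hα0
        · -- α > 0
          rw [mul_comm, ← div_le_iff₀ hαpos]
          unfold PsiG
          have hmem : cutW wG leaves (leaves \ L) / (leaves \ L).card ∈
              {x | ∃ C : Finset V, C.Nonempty ∧ C ⊆ leaves \ L ∧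
                x = cutW wG leaves C / C.card} :=
            ⟨leaves \ L, hne, Finset.Subset.refl _, rfl⟩
          apply le_csInf ⟨_, hmem⟩
          rintro b ⟨Cb, hCb, hsubb, rfl⟩
          have hCbl : Cb ⊆ leaves := hsubb.trans Finset.sdiff_subset
          have hcard : (0 : ℝ) < Cb.card := by exact_mod_cast Finset.card_pos.mpr hCb
          rw [div_le_iff₀ hαpos]
          calc PsiHatT wT leaves L ≤ lamT wT Cb (leaves \ Cb) / Cb.card :=
                hPsiT_le L Cb hCb hsubb
            _ ≤ (α * cutW wG leaves Cb) / Cb.card :=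
                div_le_div_of_nonneg_right ((hsparsifier Cb hCbl).2) hcard.le
            _ = cutW wG leaves Cb / Cb.card * α := by ring
        · -- α = 0
          rw [← hα0, zero_mul]
          have hcard : (0 : ℝ) < (leaves \ L).card := by
            exact_mod_cast Finset.card_pos.mpr hne
          refine le_trans (hPsiT_le L (leaves \ L) hne (Finset.Subset.refl _)) ?_
          have h2 := (hsparsifier (leaves \ L) Finset.sdiff_subset).2
          rw [← hα0, zero_mul] at h2
          exact div_nonpos_of_nonpos_of_nonneg h2 (Nat.cast_nonneg _)
      · -- all cuts of subsets of leaves \ L are zero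
        push_neg at hz
        have hcz : ∀ C : Finset V, C.Nonempty → C ⊆ leaves \ L → cutW wG leaves C = 0 :=
          fun C h1 h2 => le_antisymm (hz C h1 h2) (hcutG C)
        have hPsiG0 : PsiG wG leaves L = 0 := by
          refine le_antisymm ?_ ?_
          · have := hPsiG_le L (leaves \ L) hne (Finset.Subset.refl _)
            rwa [hcz _ hne (Finset.Subset.refl _), zero_div] at this
          · apply Real.sInf_nonneg
            rintro x ⟨C, -, -, rfl⟩
            exact div_nonneg (hcutG C) (Nat.cast_nonneg _)
        rw [hPsiG0, mul_zero]
        refine le_trans (hPsiT_le L (leaves \ L) hne (Finset.Subset.refl _)) ?_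
        have h2 := (hsparsifier (leaves \ L) Finset.sdiff_subset).2
        rw [hcz _ hne (Finset.Subset.refl _), mul_zero] at h2
        exact div_nonpos_of_nonpos_of_nonneg h2 (Nat.cast_nonneg _)
    · -- leaves \ L = ∅ : both sides are sInf ∅ = 0
      have hPsiT0 : PsiHatT wT leaves L = 0 := by
        unfold PsiHatT
        rw [show {x | ∃ S : Finset V, S.Nonempty ∧ S ⊆ leaves \ L ∧
            x = lamT wT S (leaves \ S) / S.card} = ∅ from ?_, Real.sInf_empty]
        ext x
        simp only [Set.mem_setOf_eq, Set.mem_empty_iff_false, iff_false, not_exists]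
        rintro S ⟨hS, hsub, -⟩
        exact hne ⟨_, hsub hS.choose_spec⟩
      have hPsiG0 : PsiG wG leaves L = 0 := by
        unfold PsiG
        rw [show {x | ∃ C : Finset V, C.Nonempty ∧ C ⊆ leaves \ L ∧
            x = cutW wG leaves C / C.card} = ∅ from ?_, Real.sInf_empty]
        ext x
        simp only [Set.mem_setOf_eq, Set.mem_empty_iff_false, iff_false, not_exists]
        rintro C ⟨hC, hsub, -⟩
        exact hne ⟨_, hsub hC.choose_spec⟩
      rw [hPsiT0, hPsiG0, mul_zero]
  -- main argument
  intro Lstar hsubst hcardst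
  by_cases hne : (leaves \ Lstar).Nonempty
  · exact le_trans (claim1 Lstar hne)
      (le_trans (hopt Lstar hsubst hcardst) (claim2 L'))
  · have hPsiG0 : PsiG wG leaves Lstar = 0 := by
      unfold PsiG
      rw [show {x | ∃ C : Finset V, C.Nonempty ∧ C ⊆ leaves \ Lstar ∧
          x = cutW wG leaves C / C.card} = ∅ from ?_, Real.sInf_empty]
      ext x
      simp only [Set.mem_setOf_eq, Set.mem_empty_iff_false, iff_false, not_exists]
      rintro C ⟨hC, hsub, -⟩
      exact hne ⟨_, hsub hC.choose_spec⟩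
    rw [hPsiG0]
    have h1 : 0 ≤ PsiHatT wT leaves L' := by
      apply Real.sInf_nonneg
      rintro x ⟨S, -, -, rfl⟩
      exact div_nonneg (hlam _ _) (Nat.cast_nonneg _)
    exact le_trans h1 (claim2 L')
end

section
/- Let T be a tree with n leaves, L ⊆ leaves(T), τ ≥ 0, and let T_{L,τ} be the flow graph obtained by adding a source s connected to each leaf with capacity τ and a sink t connected to each vertex of L with capacity ∞. If the minimum s-t cut in T_{L,τ} has value strictly less than τ·n, then Ψ̂_T(L) < τ. -/
open Finset
open scoped ENNReal

/-- Weight of the (directed) cut leaving `S` in a graph with capacities `c`. -/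
noncomputable def treeCutE {V : Type*} [Fintype V] [DecidableEq V] (c : V → V → ℝ≥0∞)
    (S : Finset V) : ℝ≥0∞ :=
  ∑ u ∈ S, ∑ v ∈ Sᶜ, c u v

/-- `λ(A,B)`: minimum weight of a cut separating `A` from `B`. -/
noncomputable def lamE {V : Type*} [Fintype V] [DecidableEq V] (c : V → V → ℝ≥0∞)
    (A B : Finset V) : ℝ≥0∞ :=
  ⨅ S ∈ {S : Finset V | A ⊆ S ∧ Disjoint S B}, treeCutE c S

/-- `Ψ̂_T(L)` for the tree with edge weights `w` and leaf set `leaves`. -/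
noncomputable def PsiHatE {V : Type*} [Fintype V] [DecidableEq V] (w : V → V → ℝ≥0∞)
    (leaves L : Finset V) : ℝ≥0∞ :=
  ⨅ S ∈ {S : Finset V | S.Nonempty ∧ S ⊆ leaves \ L},
    lamE w S (leaves \ S) / (S.card : ℝ≥0∞)

/-- Capacities of the flow graph `T_{L,τ}`: all tree edges, an edge of capacity `τ` between
the source `s = Sum.inr true` and every leaf, and an edge of capacity `∞` between every
vertex of `L` and the sink `t = Sum.inr false`. -/
noncomputable def flowW {V : Type*} [DecidableEq V] (w : V → V → ℝ≥0∞)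
    (leaves L : Finset V) (τ : ℝ≥0∞) : (V ⊕ Bool) → (V ⊕ Bool) → ℝ≥0∞
  | Sum.inl u, Sum.inl v => w u v
  | Sum.inr true, Sum.inl v => if v ∈ leaves then τ else 0
  | Sum.inl v, Sum.inr true => if v ∈ leaves then τ else 0
  | Sum.inl v, Sum.inr false => if v ∈ L then ⊤ else 0
  | Sum.inr false, Sum.inl v => if v ∈ L then ⊤ else 0
  | Sum.inr _, Sum.inr _ => 0

/-- The value of the minimum `s`-`t` cut (= maximum `s`-`t` flow) in `T_{L,τ}`. -/
noncomputable def minSTcut {V : Type*} [Fintype V] [DecidableEq V] (w : V → V → ℝ≥0∞)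
    (leaves L : Finset V) (τ : ℝ≥0∞) : ℝ≥0∞ :=
  lamE (flowW w leaves L τ) {Sum.inr true} {Sum.inr false}

/-!
Take a source side `S` of an `s`-`t` cut of `T_{L,τ}` of value `< τ n`, and let `X` be its tree
vertices. The cut is finite, so `X` avoids `L`; it pays `τ` for each leaf outside `X` plus the
weight of the tree edges leaving `X`. Hence those tree edges weigh less than `τ |leaves ∩ X|`,
so `leaves ∩ X` is a nonempty set of leaves outside `L` that `X` separates from the remaining
leaves at cost below `τ` per leaf.
-/

section Cuts

variable {W : Type*} [Fintype W] [DecidableEq W]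

lemma lamE_lt_iff {c : W → W → ℝ≥0∞} {A B : Finset W} {x : ℝ≥0∞} :
    lamE c A B < x ↔ ∃ S, A ⊆ S ∧ Disjoint S B ∧ treeCutE c S < x := by
  simp [lamE, iInf_lt_iff, and_assoc]

lemma le_treeCutE (c : W → W → ℝ≥0∞) {S : Finset W} {u v : W} (hu : u ∈ S) (hv : v ∉ S) :
    c u v ≤ treeCutE c S :=
  (single_le_sum (f := fun v => c u v) (fun _ _ => zero_le) (mem_compl.2 hv)).trans
    (single_le_sum (f := fun u => ∑ v ∈ Sᶜ, c u v) (fun _ _ => zero_le) hu)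

end Cuts

section FlowGraph

variable {V : Type*} [Fintype V] [DecidableEq V] {w : V → V → ℝ≥0∞} {leaves L : Finset V}
  {τ : ℝ≥0∞}

lemma disjoint_toLeft_of_treeCutE_flowW_ne_top {S : Finset (V ⊕ Bool)} (ht : Sum.inr false ∉ S)
    (hS : treeCutE (flowW w leaves L τ) S ≠ ⊤) : Disjoint S.toLeft L := by
  refine disjoint_left.2 fun u hu huL => hS (top_le_iff.1 ?_)
  simpa [flowW, huL] using le_treeCutE (flowW w leaves L τ) (mem_toLeft.1 hu) ht

lemma add_treeCutE_le_treeCutE_flowW {S : Finset (V ⊕ Bool)} (hs : Sum.inr true ∈ S) :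
    τ * #(leaves \ S.toLeft) + treeCutE w S.toLeft ≤ treeCutE (flowW w leaves L τ) S := by
  set X := S.toLeft
  have hsX : Sum.inr true ∉ X.map .inl := by simp
  have hsub : cons (Sum.inr true) (X.map .inl) hsX ⊆ S :=
    cons_subset.2 ⟨hs, map_inl_subset_iff_subset_toLeft.2 subset_rfl⟩
  have hsource : τ * #(leaves \ X) ≤ ∑ v ∈ Sᶜ, flowW w leaves L τ (Sum.inr true) v := by
    calc τ * #(leaves \ X) = ∑ v ∈ (leaves \ X).map .inl, flowW w leaves L τ (Sum.inr true) v := by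
          rw [sum_map, mul_comm, ← nsmul_eq_mul, ← sum_const]
          exact sum_congr rfl fun v hv => by simp [flowW, (mem_sdiff.1 hv).1]
      _ ≤ _ := sum_le_sum_of_subset fun x hx => by
          obtain ⟨v, hv, rfl⟩ := mem_map.1 hx
          simpa [X] using (mem_sdiff.1 hv).2
  have htree : treeCutE w X ≤ ∑ u ∈ X, ∑ v ∈ Sᶜ, flowW w leaves L τ (Sum.inl u) v := by
    refine sum_le_sum fun u _ => ?_
    calc ∑ v ∈ Xᶜ, w u v = ∑ v ∈ Xᶜ.map .inl, flowW w leaves L τ (Sum.inl u) v := by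
          rw [sum_map]; rfl
      _ ≤ _ := sum_le_sum_of_subset fun x hx => by
          obtain ⟨v, hv, rfl⟩ := mem_map.1 hx
          simpa [X] using hv
  calc τ * #(leaves \ X) + treeCutE w X
      ≤ ∑ u ∈ cons (Sum.inr true) (X.map .inl) hsX, ∑ v ∈ Sᶜ, flowW w leaves L τ u v := by
        rw [sum_cons, sum_map]
        exact add_le_add hsource htree
    _ ≤ _ := sum_le_sum_of_subset hsub

lemma exists_treeCutE_lt_of_minSTcut_lt (h : minSTcut w leaves L τ < τ * #leaves) :
    ∃ X, Disjoint X L ∧ treeCutE w X < τ * #(leaves ∩ X) := by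
  obtain ⟨S, hs, ht, hcut⟩ := lamE_lt_iff.1 h
  rw [singleton_subset_iff] at hs
  rw [disjoint_singleton_right] at ht
  have hbound : _ ≤ treeCutE (flowW w leaves L τ) S := add_treeCutE_le_treeCutE_flowW hs
  refine ⟨S.toLeft, disjoint_toLeft_of_treeCutE_flowW_ne_top ht hcut.ne_top, ?_⟩
  have hsource_ne_top : τ * #(leaves \ S.toLeft) ≠ ⊤ :=
    ((le_self_add.trans hbound).trans_lt hcut).ne_top
  rw [← ENNReal.add_lt_add_iff_left hsource_ne_top, ← mul_add, ← Nat.cast_add,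
    card_sdiff_add_card_inter]
  exact hbound.trans_lt hcut

lemma PsiHatE_le_treeCutE_div {X : Finset V} (hXL : Disjoint X L)
    (hne : (leaves ∩ X).Nonempty) :
    PsiHatE w leaves L ≤ treeCutE w X / #(leaves ∩ X) := by
  have hsep : lamE w (leaves ∩ X) (leaves \ (leaves ∩ X)) ≤ treeCutE w X :=
    iInf₂_le X ⟨inter_subset_right, disjoint_left.2 fun v hv hv' =>
      (mem_sdiff.1 hv').2 (mem_inter.2 ⟨(mem_sdiff.1 hv').1, hv⟩)⟩
  refine (iInf₂_le (leaves ∩ X) ⟨hne, fun v hv => ?_⟩).trans (ENNReal.div_le_div_right hsep _)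
  exact mem_sdiff.2 ⟨(mem_inter.1 hv).1, disjoint_left.1 hXL (mem_inter.1 hv).2⟩

lemma PsiHatE_lt_of_treeCutE_lt {X : Finset V} (hXL : Disjoint X L)
    (h : treeCutE w X < τ * #(leaves ∩ X)) : PsiHatE w leaves L < τ := by
  have hne : (leaves ∩ X).Nonempty := by
    rw [nonempty_iff_ne_empty]
    rintro he
    simp [he] at h
  exact (PsiHatE_le_treeCutE_div hXL hne).trans_lt (ENNReal.div_lt_of_lt_mul h)

end FlowGraph

theorem stmt4_general {V : Type*} [Fintype V] [DecidableEq V]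
    (w : V → V → ℝ≥0∞)
    (leaves : Finset V)
    (L : Finset V) (τ : ℝ≥0∞)
    (h : minSTcut w leaves L τ < τ * (leaves.card : ℝ≥0∞)) :
    PsiHatE w leaves L < τ := by
  obtain ⟨X, hXL, hX⟩ := exists_treeCutE_lt_of_minSTcut_lt h
  exact PsiHatE_lt_of_treeCutE_lt hXL hX

/-- if the minimum `s`-`t` cut in `T_{L,τ}` has value strictly less than `τ·n`
(`n` the number of leaves of the tree `T`), then `Ψ̂_T(L) < τ`. -/
theorem stmt4 {V : Type*} [Fintype V] [DecidableEq V]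
    (T : SimpleGraph V) [DecidableRel T.Adj] (hT : T.IsTree)
    (w : V → V → ℝ≥0∞) (hsymm : ∀ u v, w u v = w v u)
    (hsupp : ∀ u v, w u v ≠ 0 → T.Adj u v) (hfin : ∀ u v, w u v ≠ ⊤)
    (leaves : Finset V) (hleaves : leaves = Finset.univ.filter (fun x => T.degree x = 1))
    (L : Finset V) (hL : L ⊆ leaves) (τ : ℝ≥0∞) (hτ : τ ≠ ⊤)
    (h : minSTcut w leaves L τ < τ * (leaves.card : ℝ≥0∞)) :
    PsiHatE w leaves L < τ :=
  stmt4_general w leaves L τ h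
end

section
/- Let T be a tree with n leaves, L ⊆ leaves(T), τ ≥ 0. If Ψ̂_T(L) < τ, then the minimum s-t cut in the flow graph T_{L,τ} has value strictly less than τ·n. -/
open Finset
open scoped ENNReal

/-- if `Ψ̂_T(L) < τ`, then the minimum `s`-`t` cut in the flow graph `T_{L,τ}`
has value strictly less than `τ·n`. -/
theorem stmt5 {V : Type*} [Fintype V] [DecidableEq V]
    (T : SimpleGraph V) [DecidableRel T.Adj] (hT : T.IsTree)
    (w : V → V → ℝ≥0∞) (hsymm : ∀ u v, w u v = w v u)
    (hsupp : ∀ u v, w u v ≠ 0 → T.Adj u v) (hfin : ∀ u v, w u v ≠ ⊤)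
    (leaves : Finset V) (hleaves : leaves = Finset.univ.filter (fun x => T.degree x = 1))
    (L : Finset V) (hL : L ⊆ leaves) (τ : ℝ≥0∞) (hτ : τ ≠ ⊤)
    (h : PsiHatE w leaves L < τ) :
    minSTcut w leaves L τ < τ * (leaves.card : ℝ≥0∞) := by

  classical
  -- extract S
  have h1 : ∃ S : Finset V, (S.Nonempty ∧ S ⊆ leaves \ L) ∧
      lamE w S (leaves \ S) / (S.card : ℝ≥0∞) < τ := by
    unfold PsiHatE at h
    simpa [iInf_lt_iff] using h
  obtain ⟨S, ⟨hSne, hSsub⟩, hSlt⟩ := h1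
  have hcard0 : (S.card : ℝ≥0∞) ≠ 0 := by
    simpa using hSne.card_pos.ne'
  have hlam : lamE w S (leaves \ S) < τ * (S.card : ℝ≥0∞) := by
    rwa [ENNReal.div_lt_iff (Or.inl hcard0) (Or.inl (by simp))] at hSlt
  -- extract C
  have h2 : ∃ C : Finset V, (S ⊆ C ∧ Disjoint C (leaves \ S)) ∧
      treeCutE w C < τ * (S.card : ℝ≥0∞) := by
    unfold lamE at hlam
    simpa [iInf_lt_iff] using hlam
  obtain ⟨C, ⟨hSC, hCdisj⟩, hcut⟩ := h2
  have hSleaves : S ⊆ leaves := hSsub.trans (Finset.sdiff_subset)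
  have hCL : ∀ x ∈ C, x ∉ L := by
    intro x hxC hxL
    have hxleaves : x ∈ leaves := hL hxL
    have hxS : x ∉ S := fun hxS => (Finset.mem_sdiff.mp (hSsub hxS)).2 hxL
    exact (Finset.disjoint_left.mp hCdisj) hxC (Finset.mem_sdiff.mpr ⟨hxleaves, hxS⟩)
  have hLCdiff : leaves \ C = leaves \ S := by
    ext x
    simp only [Finset.mem_sdiff]
    constructor
    · rintro ⟨hx, hxC⟩; exact ⟨hx, fun hxS => hxC (hSC hxS)⟩
    · rintro ⟨hx, hxS⟩
      refine ⟨hx, fun hxC => ?_⟩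
      exact (Finset.disjoint_left.mp hCdisj) hxC (Finset.mem_sdiff.mpr ⟨hx, hxS⟩)
  -- the cut in the flow graph
  set C' : Finset (V ⊕ Bool) := insert (Sum.inr true) (C.image Sum.inl) with hC'
  have hmemC' : {(Sum.inr true : V ⊕ Bool)} ⊆ C' ∧ Disjoint C' {(Sum.inr false : V ⊕ Bool)} := by
    constructor
    · simp [hC']
    · simp [hC', Finset.disjoint_right]
  have hle : minSTcut w leaves L τ ≤ treeCutE (flowW w leaves L τ) C' := by
    unfold minSTcut lamE
    exact iInf₂_le C' hmemC'
  have hcompl : C'ᶜ = insert (Sum.inr false) (Cᶜ.image Sum.inl) := by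
    ext x
    cases x with
    | inl v => simp [hC']
    | inr b => cases b <;> simp [hC']
  have hval : treeCutE (flowW w leaves L τ) C'
      = treeCutE w C + τ * ((leaves \ C).card : ℝ≥0∞) := by
    unfold treeCutE
    rw [hcompl, hC']
    rw [Finset.sum_insert (by simp)]
    have hinj : Function.Injective (Sum.inl : V → V ⊕ Bool) := Sum.inl_injective
    have inner : ∀ u : V ⊕ Bool,
        ∑ v ∈ insert (Sum.inr false) (Cᶜ.image Sum.inl), flowW w leaves L τ u v
        = flowW w leaves L τ u (Sum.inr false) + ∑ y ∈ Cᶜ, flowW w leaves L τ u (Sum.inl y) := by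
      intro u
      rw [Finset.sum_insert (by simp), Finset.sum_image (fun a _ b _ h => hinj h)]
    simp only [inner]
    rw [Finset.sum_image (fun a _ b _ h => hinj h)]
    have hsrc : flowW w leaves L τ (Sum.inr true) (Sum.inr false) = 0 := rfl
    have hsrcleaf : ∀ y, flowW w leaves L τ (Sum.inr true) (Sum.inl y)
        = if y ∈ leaves then τ else 0 := fun y => rfl
    have hsum1 : ∑ y ∈ Cᶜ, flowW w leaves L τ (Sum.inr true) (Sum.inl y)
        = τ * ((leaves \ C).card : ℝ≥0∞) := by
      simp only [hsrcleaf]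
      rw [← Finset.sum_filter]
      have : Cᶜ.filter (fun y => y ∈ leaves) = leaves \ C := by
        ext x; simp [and_comm]
      rw [this, Finset.sum_const, nsmul_eq_mul, mul_comm]
    have hrest : ∀ x ∈ C,
        (flowW w leaves L τ (Sum.inl x) (Sum.inr false)
          + ∑ y ∈ Cᶜ, flowW w leaves L τ (Sum.inl x) (Sum.inl y))
        = ∑ y ∈ Cᶜ, w x y := by
      intro x hx
      have : flowW w leaves L τ (Sum.inl x) (Sum.inr false) = 0 := by
        simp [flowW, hCL x hx]
      rw [this, zero_add]
      rfl
    rw [hsrc, zero_add, hsum1, Finset.sum_congr rfl hrest]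
    ring
  have hfinal : treeCutE w C + τ * ((leaves \ C).card : ℝ≥0∞) < τ * (leaves.card : ℝ≥0∞) := by
    have hne : τ * ((leaves \ C).card : ℝ≥0∞) ≠ ⊤ :=
      ENNReal.mul_ne_top hτ (ENNReal.natCast_ne_top _)
    have hlt : treeCutE w C + τ * ((leaves \ C).card : ℝ≥0∞)
        < τ * (S.card : ℝ≥0∞) + τ * ((leaves \ C).card : ℝ≥0∞) :=
      ENNReal.add_lt_add_right hne hcut
    have hcards : (leaves \ S).card + S.card = leaves.card :=
      Finset.card_sdiff_add_card_eq_card hSleaves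
    have heq : τ * (S.card : ℝ≥0∞) + τ * ((leaves \ C).card : ℝ≥0∞)
        = τ * (leaves.card : ℝ≥0∞) := by
      rw [hLCdiff, ← mul_add]
      congr 1
      rw [← Nat.cast_add, add_comm, hcards]
    rw [heq] at hlt
    exact hlt
  calc minSTcut w leaves L τ ≤ treeCutE (flowW w leaves L τ) C' := hle
    _ = treeCutE w C + τ * ((leaves \ C).card : ℝ≥0∞) := hval
    _ < τ * (leaves.card : ℝ≥0∞) := hfinal
end

section
/- Let T be a tree with n leaves, L ⊆ leaves(T), τ ≥ 0. Then Ψ̂_T(L) ≥ τ if and only if the minimum s-t cut (equivalently the maximum s-t flow) in T_{L,τ} equals n·τ. -/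
open Finset
open scoped ENNReal

/-!
Every `s`-`t` cut of `T_{L,τ}` is `S ⊕ {s}` for a vertex set `S` of the tree. Its weight is
infinite unless `S` avoids `L`, and otherwise it is the tree cut of `S` plus `τ` for each leaf
outside `S`. As `τ < ∞`, this is at least `n·τ` iff the tree cut of `S` is at least
`τ·|leaves ∩ S|`. The sets `S ⊇ A` avoiding `leaves \ A`, for `A ⊆ leaves \ L`, avoid `L` and
meet the leaves exactly in `A`, so these conditions together say `λ_T(A, leaves \ A) ≥ τ·|A|`
for all such `A`, i.e. `Ψ̂_T(L) ≥ τ`.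
-/

namespace Finset

theorem compl_disjSum {α β : Type*} [Fintype α] [Fintype β] [DecidableEq α] [DecidableEq β]
    (s : Finset α) (t : Finset β) : (s.disjSum t)ᶜ = sᶜ.disjSum tᶜ := by
  ext (a | b) <;> simp

theorem card_inter_mul_le_iff_le_add {α : Type*} [DecidableEq α] (s t : Finset α) {τ : ℝ≥0∞}
    (hτ : τ ≠ ⊤) (a : ℝ≥0∞) : #(s ∩ t) * τ ≤ a ↔ #s * τ ≤ a + #(s \ t) * τ := by
  rw [← card_inter_add_card_sdiff s t, Nat.cast_add, add_mul,
    ENNReal.add_le_add_iff_right (ENNReal.mul_ne_top (ENNReal.natCast_ne_top _) hτ)]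

theorem le_div_card_iff {α : Type*} {s : Finset α} (hs : s.Nonempty) {a b : ℝ≥0∞} :
    a ≤ b / #s ↔ #s * a ≤ b := by
  rw [ENNReal.le_div_iff_mul_le (Or.inl (by simpa using hs.ne_empty))
    (Or.inl (ENNReal.natCast_ne_top _)), mul_comm]

end Finset

section Cuts

variable {V : Type*} [Fintype V] [DecidableEq V]

theorem lamE_le_treeCutE {c : V → V → ℝ≥0∞} {A B S : Finset V} (hA : A ⊆ S)
    (hB : Disjoint S B) : lamE c A B ≤ treeCutE c S :=
  biInf_le _ ⟨hA, hB⟩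

theorem le_lamE_iff {c : V → V → ℝ≥0∞} {A B : Finset V} {a : ℝ≥0∞} :
    a ≤ lamE c A B ↔ ∀ S, A ⊆ S → Disjoint S B → a ≤ treeCutE c S := by
  simp only [lamE, le_iInf₂_iff, Set.mem_ofPred_eq, and_imp]

variable (w : V → V → ℝ≥0∞) (leaves L : Finset V) (τ : ℝ≥0∞)

theorem treeCutE_flowW_disjSum (S : Finset V) :
    treeCutE (flowW w leaves L τ) (S.disjSum {true}) =
      treeCutE w S + #(leaves \ S) * τ + ∑ u ∈ S, if u ∈ L then ⊤ else 0 := by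
  have hcompl : ({true}ᶜ : Finset Bool) = {false} := by decide
  have hleaves : ∑ v ∈ Sᶜ, (if v ∈ leaves then τ else 0) = #(leaves \ S) * τ := by
    rw [← sum_filter, sum_const, nsmul_eq_mul, filter_mem_eq_inter, inter_comm,
      ← sdiff_eq_inter_compl]
  simp only [treeCutE, compl_disjSum, hcompl, sum_disjSum, sum_singleton, flowW, sum_add_distrib,
    hleaves, add_zero]

theorem treeCutE_flowW_disjSum_of_disjoint {S : Finset V} (hS : Disjoint S L) :
    treeCutE (flowW w leaves L τ) (S.disjSum {true}) = treeCutE w S + #(leaves \ S) * τ := by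
  rw [treeCutE_flowW_disjSum, sum_eq_zero fun u hu => if_neg (disjoint_left.mp hS hu), add_zero]

theorem treeCutE_flowW_disjSum_of_not_disjoint {S : Finset V} (hS : ¬Disjoint S L) :
    treeCutE (flowW w leaves L τ) (S.disjSum {true}) = ⊤ := by
  obtain ⟨u, huS, huL⟩ := not_disjoint_iff.mp hS
  rw [treeCutE_flowW_disjSum, ENNReal.add_eq_top, ENNReal.sum_eq_top]
  exact Or.inr ⟨u, huS, if_pos huL⟩

theorem le_minSTcut_iff {a : ℝ≥0∞} :
    a ≤ minSTcut w leaves L τ ↔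
      ∀ S : Finset V, Disjoint S L → a ≤ treeCutE w S + #(leaves \ S) * τ := by
  rw [minSTcut, le_lamE_iff]
  constructor
  · intro h S hS
    rw [← treeCutE_flowW_disjSum_of_disjoint w leaves L τ hS]
    exact h _ (by simp) (by simp)
  · intro h S hs ht
    have hright : S.toRight = {true} := by
      ext (_ | _) <;> simp_all
    rw [← toLeft_disjSum_toRight (u := S), hright]
    by_cases hS : Disjoint S.toLeft L
    · rw [treeCutE_flowW_disjSum_of_disjoint w leaves L τ hS]
      exact h _ hS
    · rw [treeCutE_flowW_disjSum_of_not_disjoint w leaves L τ hS]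
      exact le_top

theorem minSTcut_le_card_mul : minSTcut w leaves L τ ≤ #leaves * τ := by
  have h := lamE_le_treeCutE (c := flowW w leaves L τ) (A := {Sum.inr true})
    (B := {Sum.inr false}) (S := (∅ : Finset V).disjSum {true}) (by simp) (by simp)
  rwa [treeCutE_flowW_disjSum_of_disjoint w leaves L τ (disjoint_empty_left L), sdiff_empty,
    treeCutE, sum_empty, zero_add] at h

theorem le_PsiHatE_iff (hL : L ⊆ leaves) :
    τ ≤ PsiHatE w leaves L ↔
      ∀ S : Finset V, Disjoint S L → #(leaves ∩ S) * τ ≤ treeCutE w S := by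
  simp only [PsiHatE, le_iInf₂_iff, Set.mem_ofPred_eq, and_imp]
  constructor
  · intro h S hS
    rcases (leaves ∩ S).eq_empty_or_nonempty with hA | hA
    · simp [hA]
    have hAL : leaves ∩ S ⊆ leaves \ L := fun u hu =>
      mem_sdiff.mpr ⟨(mem_inter.mp hu).1, disjoint_left.mp hS (mem_inter.mp hu).2⟩
    calc #(leaves ∩ S) * τ ≤ lamE w (leaves ∩ S) (leaves \ (leaves ∩ S)) :=
        (le_div_card_iff hA).mp (h _ hA hAL)
      _ ≤ treeCutE w S := lamE_le_treeCutE inter_subset_right (by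
          rw [sdiff_inter_self_left]; exact sdiff_disjoint.symm)
  · intro h A hA hAL
    rw [le_div_card_iff hA, le_lamE_iff]
    intro S hAS hSB
    have hinter : leaves ∩ S = A := by
      refine Subset.antisymm (fun u hu => ?_) (subset_inter (hAL.trans sdiff_subset) hAS)
      by_contra huA
      exact disjoint_left.mp hSB (mem_inter.mp hu).2 (mem_sdiff.mpr ⟨(mem_inter.mp hu).1, huA⟩)
    have hSL : Disjoint S L := disjoint_left.mpr fun u huS huL => by
      have hu : u ∈ leaves ∩ S := mem_inter.mpr ⟨hL huL, huS⟩
      rw [hinter] at hu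
      exact (mem_sdiff.mp (hAL hu)).2 huL
    simpa [hinter] using h S hSL

end Cuts

theorem stmt6_general {V : Type*} [Fintype V] [DecidableEq V]
    (w : V → V → ℝ≥0∞)
    (leaves : Finset V)
    (L : Finset V) (hL : L ⊆ leaves) (τ : ℝ≥0∞) (hτ : τ ≠ ⊤) :
    τ ≤ PsiHatE w leaves L ↔
      minSTcut w leaves L τ = (leaves.card : ℝ≥0∞) * τ := by
  rw [le_PsiHatE_iff w leaves L τ hL, le_antisymm_iff,
    and_iff_right (minSTcut_le_card_mul w leaves L τ), le_minSTcut_iff]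
  exact forall₂_congr fun S _ => card_inter_mul_le_iff_le_add leaves S hτ _

/-- `Ψ̂_T(L) ≥ τ` if and only if the minimum `s`-`t` cut (equivalently the
maximum `s`-`t` flow) in `T_{L,τ}` equals `n·τ`. -/
theorem stmt6 {V : Type*} [Fintype V] [DecidableEq V]
    (T : SimpleGraph V) [DecidableRel T.Adj] (hT : T.IsTree)
    (w : V → V → ℝ≥0∞) (hsymm : ∀ u v, w u v = w v u)
    (hsupp : ∀ u v, w u v ≠ 0 → T.Adj u v) (hfin : ∀ u v, w u v ≠ ⊤)
    (leaves : Finset V) (hleaves : leaves = Finset.univ.filter (fun x => T.degree x = 1))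
    (L : Finset V) (hL : L ⊆ leaves) (τ : ℝ≥0∞) (hτ : τ ≠ ⊤) :
    τ ≤ PsiHatE w leaves L ↔
      minSTcut w leaves L τ = (leaves.card : ℝ≥0∞) * τ :=
  stmt6_general w leaves L hL τ hτ
end

section
/- Let T be a tree with leaf set leaves(T), f : V → ℝ>0 an importance function, L ⊆ leaves(T), and τ ≥ 0. Define T^f_{L,τ} as the flow graph where the source s connects to each leaf v with capacity τ·f(v) and the sink t receives infinite-capacity edges from each vertex of L. Then Ψ̂^f_T(L) ≥ τ if and only if the minimum s-t cut in T^f_{L,τ} equals τ·Σ_{v∈leaves(T)} f(v). -/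
open Finset
open scoped ENNReal

/-- Importance-weighted objective `Ψ̂^f_T(L)`. -/
noncomputable def PsiHatEf {V : Type*} [Fintype V] [DecidableEq V] (w : V → V → ℝ≥0∞)
    (f : V → ℝ≥0∞) (leaves L : Finset V) : ℝ≥0∞ :=
  ⨅ S ∈ {S : Finset V | S.Nonempty ∧ S ⊆ leaves \ L},
    lamE w S (leaves \ S) / ∑ v ∈ S, f v

/-- Capacities of the importance-weighted flow graph `T^f_{L,τ}`: all tree edges, an edge of
capacity `τ·f(v)` between the source `s = Sum.inr true` and every leaf `v`, and an edge of
capacity `∞` between every vertex of `L` and the sink `t = Sum.inr false`. -/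
noncomputable def flowWf {V : Type*} [DecidableEq V] (w : V → V → ℝ≥0∞) (f : V → ℝ≥0∞)
    (leaves L : Finset V) (τ : ℝ≥0∞) : (V ⊕ Bool) → (V ⊕ Bool) → ℝ≥0∞
  | Sum.inl u, Sum.inl v => w u v
  | Sum.inr true, Sum.inl v => if v ∈ leaves then τ * f v else 0
  | Sum.inl v, Sum.inr true => if v ∈ leaves then τ * f v else 0
  | Sum.inl v, Sum.inr false => if v ∈ L then ⊤ else 0
  | Sum.inr false, Sum.inl v => if v ∈ L then ⊤ else 0
  | Sum.inr _, Sum.inr _ => 0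

/-- The minimum `s`-`t` cut value in `T^f_{L,τ}`. -/
noncomputable def minSTcutF {V : Type*} [Fintype V] [DecidableEq V] (w : V → V → ℝ≥0∞)
    (f : V → ℝ≥0∞) (leaves L : Finset V) (τ : ℝ≥0∞) : ℝ≥0∞ :=
  lamE (flowWf w f leaves L τ) {Sum.inr true} {Sum.inr false}

/-! An `s`-`t` cut of `T^f_{L,τ}` that puts a vertex of `L` on the source side costs `∞`; every
other one is `{s} ∪ A` with `A ∩ L = ∅` and costs `δ_T(A) + τ·f(leaves ∖ A)`, where `δ_T(A)` is the
weight of the tree edges leaving `A`. Since `{s}` alone costs `τ·f(leaves)`, the minimum cut equals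
`τ·f(leaves)` iff `τ·f(leaves ∩ A) ≤ δ_T(A)` for all such `A`. Grouping the `A` by
`S = leaves ∩ A` turns this into `τ·f(S) ≤ λ_T(S, leaves ∖ S)` for all `S ⊆ leaves ∖ L`, which is
`Ψ̂^f_T(L) ≥ τ`. -/

section FlowGraph

variable {V : Type*} [Fintype V] [DecidableEq V] (w : V → V → ℝ≥0∞) (f : V → ℝ≥0∞)
  (leaves L : Finset V) (τ : ℝ≥0∞)

lemma treeCutE_empty (c : V → V → ℝ≥0∞) : treeCutE c ∅ = 0 :=
  sum_empty

lemma treeCutE_flowWf_insert_source {A : Finset V} (hAL : Disjoint A L) :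
    treeCutE (flowWf w f leaves L τ) (insert (Sum.inr true) (A.image Sum.inl))
      = treeCutE w A + τ * ∑ v ∈ leaves \ A, f v := by
  have hcompl : (insert (Sum.inr true) (A.image Sum.inl) : Finset (V ⊕ Bool))ᶜ
      = insert (Sum.inr false) (Aᶜ.image Sum.inl) := by
    ext (v | b)
    · simp
    · cases b <;> simp
  have hsource : ∑ v ∈ insert (Sum.inr false) (Aᶜ.image Sum.inl),
      flowWf w f leaves L τ (Sum.inr true) v = τ * ∑ v ∈ leaves \ A, f v := by
    rw [sum_insert (by simp), sum_image Sum.inl_injective.injOn]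
    simp only [flowWf, zero_add]
    rw [sum_ite_mem, mul_sum]
    exact sum_congr (by ext; simp [and_comm]) fun _ _ => rfl
  have htree : ∑ u ∈ A.image Sum.inl, ∑ v ∈ insert (Sum.inr false) (Aᶜ.image Sum.inl),
      flowWf w f leaves L τ u v = treeCutE w A := by
    rw [sum_image Sum.inl_injective.injOn, treeCutE]
    refine sum_congr rfl fun a ha => ?_
    rw [sum_insert (by simp), sum_image Sum.inl_injective.injOn]
    simp [flowWf, disjoint_left.mp hAL ha]
  rw [treeCutE, hcompl, sum_insert (by simp), hsource, htree, add_comm]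

lemma treeCutE_flowWf_eq_top {C : Finset (V ⊕ Bool)} {v : V} (hvC : Sum.inl v ∈ C)
    (hvL : v ∈ L) (ht : Sum.inr false ∉ C) : treeCutE (flowWf w f leaves L τ) C = ⊤ := by
  refine top_le_iff.mp ?_
  calc (⊤ : ℝ≥0∞) = flowWf w f leaves L τ (Sum.inl v) (Sum.inr false) := by simp [flowWf, hvL]
    _ ≤ ∑ y ∈ Cᶜ, flowWf w f leaves L τ (Sum.inl v) y :=
      single_le_sum (fun _ _ => zero_le) (mem_compl.mpr ht)
    _ ≤ treeCutE (flowWf w f leaves L τ) C :=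
      single_le_sum (f := fun u => ∑ y ∈ Cᶜ, flowWf w f leaves L τ u y) (fun _ _ => zero_le) hvC

lemma minSTcutF_eq_iInf : minSTcutF w f leaves L τ =
    ⨅ A ∈ {A : Finset V | Disjoint A L}, treeCutE w A + τ * ∑ v ∈ leaves \ A, f v := by
  refine le_antisymm (le_iInf₂ fun A hAL => ?_) (le_iInf₂ fun C ⟨hsC, htC⟩ => ?_)
  · rw [← treeCutE_flowWf_insert_source w f leaves L τ hAL]
    exact iInf₂_le _ ⟨by simp, by simp [Finset.disjoint_right]⟩
  · have ht : Sum.inr false ∉ C := disjoint_singleton_right.mp htC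
    set A := univ.filter fun v => Sum.inl v ∈ C
    by_cases hAL : Disjoint A L
    · have hC : C = insert (Sum.inr true) (A.image Sum.inl) := by
        ext (v | b)
        · simp [A]
        · cases b
          · simp [ht]
          · simpa using singleton_subset_iff.mp hsC
      rw [hC, treeCutE_flowWf_insert_source w f leaves L τ hAL]
      exact iInf₂_le A hAL
    · obtain ⟨v, hvA, hvL⟩ := not_disjoint_iff.mp hAL
      rw [treeCutE_flowWf_eq_top w f leaves L τ (mem_filter.mp hvA).2 hvL ht]
      exact le_top

lemma minSTcutF_le : minSTcutF w f leaves L τ ≤ τ * ∑ v ∈ leaves, f v := by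
  rw [minSTcutF_eq_iInf]
  refine (iInf₂_le ∅ (disjoint_empty_left L)).trans_eq ?_
  rw [treeCutE_empty, sdiff_empty, zero_add]

variable {w f leaves L τ}

lemma minSTcutF_eq_iff (hf' : ∀ v, f v ≠ ⊤) (hτ : τ ≠ ⊤) :
    minSTcutF w f leaves L τ = τ * ∑ v ∈ leaves, f v ↔
      ∀ A : Finset V, Disjoint A L → τ * ∑ v ∈ leaves ∩ A, f v ≤ treeCutE w A := by
  rw [le_antisymm_iff, and_iff_right (minSTcutF_le w f leaves L τ), minSTcutF_eq_iInf,
    le_iInf₂_iff]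
  refine forall₂_congr fun A _ => ?_
  have hfinite : τ * ∑ v ∈ leaves \ A, f v ≠ ⊤ :=
    ENNReal.mul_ne_top hτ (ENNReal.sum_ne_top.mpr fun v _ => hf' v)
  rw [← sum_inter_add_sum_sdiff leaves A f, mul_add, ENNReal.add_le_add_iff_right hfinite]

lemma le_psiHatEf_iff (hf : ∀ v, 0 < f v) (hf' : ∀ v, f v ≠ ⊤) :
    τ ≤ PsiHatEf w f leaves L ↔ ∀ S : Finset V, S.Nonempty → S ⊆ leaves \ L →
      τ * ∑ v ∈ S, f v ≤ lamE w S (leaves \ S) := by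
  rw [PsiHatEf, le_iInf₂_iff]
  simp only [Set.mem_ofPred_eq, and_imp]
  refine forall_congr' fun S => forall_congr' fun hS => forall_congr' fun _ => ?_
  have hpos : ∑ v ∈ S, f v ≠ 0 := (sum_pos_iff.mpr ⟨_, hS.choose_spec, hf _⟩).ne'
  have hfinite : ∑ v ∈ S, f v ≠ ⊤ := ENNReal.sum_ne_top.mpr fun v _ => hf' v
  exact ENNReal.le_div_iff_mul_le (.inl hpos) (.inl hfinite)

lemma forall_le_lamE_iff (hL : L ⊆ leaves) :
    (∀ S : Finset V, S.Nonempty → S ⊆ leaves \ L →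
        τ * ∑ v ∈ S, f v ≤ lamE w S (leaves \ S)) ↔
      ∀ A : Finset V, Disjoint A L → τ * ∑ v ∈ leaves ∩ A, f v ≤ treeCutE w A := by
  constructor
  · intro h A hAL
    rcases (leaves ∩ A).eq_empty_or_nonempty with hS | hS
    · simp [hS]
    refine (h _ hS ?_).trans (iInf₂_le A ⟨inter_subset_right, ?_⟩)
    · exact fun v hv => mem_sdiff.mpr ⟨(mem_inter.mp hv).1,
        disjoint_left.mp hAL (mem_inter.mp hv).2⟩
    · exact disjoint_left.mpr fun v hvA hv =>
        (mem_sdiff.mp hv).2 (mem_inter.mpr ⟨(mem_sdiff.mp hv).1, hvA⟩)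
  · intro h S _ hSL
    refine le_iInf₂ fun A ⟨hSA, hA⟩ => ?_
    have hAL : Disjoint A L := disjoint_left.mpr fun v hvA hvL =>
      disjoint_left.mp hA hvA (mem_sdiff.mpr ⟨hL hvL, fun hvS => (mem_sdiff.mp (hSL hvS)).2 hvL⟩)
    refine le_trans (mul_le_mul_right (sum_le_sum_of_subset fun v hvS => ?_) τ) (h A hAL)
    exact mem_inter.mpr ⟨(mem_sdiff.mp (hSL hvS)).1, hSA hvS⟩

end FlowGraph

theorem stmt15_general {V : Type*} [Fintype V] [DecidableEq V]
    (w : V → V → ℝ≥0∞)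
    (leaves : Finset V)
    (f : V → ℝ≥0∞) (hf : ∀ v, 0 < f v) (hf' : ∀ v, f v ≠ ⊤)
    (L : Finset V) (hL : L ⊆ leaves) (τ : ℝ≥0∞) (hτ : τ ≠ ⊤) :
    τ ≤ PsiHatEf w f leaves L ↔
      minSTcutF w f leaves L τ = τ * ∑ v ∈ leaves, f v := by
  rw [le_psiHatEf_iff hf hf', forall_le_lamE_iff hL, minSTcutF_eq_iff hf' hτ]

/-- `Ψ̂^f_T(L) ≥ τ` if and only if the minimum `s`-`t` cut in `T^f_{L,τ}`
equals `τ·Σ_{v ∈ leaves(T)} f(v)`. -/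
theorem stmt15 {V : Type*} [Fintype V] [DecidableEq V]
    (T : SimpleGraph V) [DecidableRel T.Adj] (hT : T.IsTree)
    (w : V → V → ℝ≥0∞) (hsymm : ∀ u v, w u v = w v u)
    (hsupp : ∀ u v, w u v ≠ 0 → T.Adj u v) (hfin : ∀ u v, w u v ≠ ⊤)
    (leaves : Finset V) (hleaves : leaves = Finset.univ.filter (fun x => T.degree x = 1))
    (f : V → ℝ≥0∞) (hf : ∀ v, 0 < f v) (hf' : ∀ v, f v ≠ ⊤)
    (L : Finset V) (hL : L ⊆ leaves) (τ : ℝ≥0∞) (hτ : τ ≠ ⊤) :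
    τ ≤ PsiHatEf w f leaves L ↔
      minSTcutF w f leaves L τ = τ * ∑ v ∈ leaves, f v :=
  stmt15_general w leaves f hf hf' L hL τ hτ
end

section
/- Let T be a rooted binary tree with root r, and suppose DP satisfies the invariant DP[v][k] = max{f : ∃ L ⊆ leaves(T_v), |L| ≤ k, maxflow in (T_v)_{L,τ,f} = n_v·τ + f}. Then the minimum budget k* for which there exists L ⊆ leaves(T), |L| ≤ k*, with maxflow n·τ in T_{L,τ} equals the smallest k with DP[r][k] ≥ 0. -/
open Finset
open scoped ENNReal

/-- Rooted binary trees with vertex labels in `V` and edge weights to the children. -/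
inductive WBT (V : Type*) : Type _ where
  | leaf (v : V) : WBT V
  | node (v : V) (wl wr : ℝ≥0∞) (l r : WBT V) : WBT V

namespace WBT

variable {V : Type*}

/-- The root vertex. -/
def root : WBT V → V
  | leaf v => v
  | node v _ _ _ _ => v

/-- The list of all vertex labels. -/
def vertList : WBT V → List V
  | leaf v => [v]
  | node v _ _ l r => v :: (l.vertList ++ r.vertList)

/-- The list of leaf labels. -/
def leafList : WBT V → List V
  | leaf v => [v]
  | node _ _ _ l r => l.leafList ++ r.leafList

/-- The set of leaves. -/
def leaves [DecidableEq V] (t : WBT V) : Finset V := t.leafList.toFinset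

/-- The (symmetric) edge-weight function of the tree. -/
noncomputable def w [DecidableEq V] : WBT V → V → V → ℝ≥0∞
  | leaf _, _, _ => 0
  | node v wl wr l r, a, b =>
      (if (a = v ∧ b = l.root) ∨ (a = l.root ∧ b = v) then wl else 0) +
      (if (a = v ∧ b = r.root) ∨ (a = r.root ∧ b = v) then wr else 0) +
      l.w a b + r.w a b

end WBT

/-- Capacities of the injected-flow gadget `(T_v)_{L,τ,f}` for the subtree `t`:
the tree edges, a source `s = Sum.inr true` with capacity-`τ` edges to every leaf of `t`
together with a directed injected-flow edge `(s, root t)` of capacity `f` (reversed, of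
capacity `-f`, if `f < 0`), and a sink `t = Sum.inr false` with infinite-capacity edges from
every vertex of `L`. -/
noncomputable def gadgetW {V : Type*} [DecidableEq V] (t : WBT V) (L : Finset V)
    (τ f : ℝ) : (V ⊕ Bool) → (V ⊕ Bool) → ℝ≥0∞
  | Sum.inl u, Sum.inl v => t.w u v
  | Sum.inr true, Sum.inl v =>
      (if v ∈ t.leaves then ENNReal.ofReal τ else 0) +
      (if v = t.root then ENNReal.ofReal f else 0)
  | Sum.inl v, Sum.inr true =>
      (if v ∈ t.leaves then ENNReal.ofReal τ else 0) +
      (if v = t.root then ENNReal.ofReal (-f) else 0)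
  | Sum.inl v, Sum.inr false => if v ∈ L then ⊤ else 0
  | Sum.inr _, Sum.inr _ => 0
  | Sum.inr false, Sum.inl _ => 0

/-- The minimum `s`-`t` cut (= maximum `s`-`t` flow) value of `(T_v)_{L,τ,f}`. -/
noncomputable def gadgetCut {V : Type*} [Fintype V] [DecidableEq V] (t : WBT V)
    (L : Finset V) (τ f : ℝ) : ℝ≥0∞ :=
  lamE (gadgetW t L τ f) {Sum.inr true} {Sum.inr false}

/-- The dynamic-programming value `DP[t][k]`: the supremum (maximum) of all injectable flows
`f` such that some `L ⊆ leaves(t)` with `|L| ≤ k` makes the max `s`-`t` flow in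
`(T_t)_{L,τ,f}` equal to `n_t·τ + f`.  It is `⊥ = -∞` if no such `f` exists and `⊤ = ∞` if
arbitrarily large `f` are feasible. -/
noncomputable def DP {V : Type*} [Fintype V] [DecidableEq V] (t : WBT V) (τ : ℝ)
    (k : ℕ) : EReal :=
  sSup (Real.toEReal '' {f : ℝ | ∃ L : Finset V, L ⊆ t.leaves ∧ L.card ≤ k ∧
    gadgetCut t L τ f = ENNReal.ofReal ((t.leaves.card : ℝ) * τ + f)})

/-! For a cut `S` containing the source, the injected edge adds `max f 0` exactly when the root
lies outside `S` (and nothing otherwise), so a set `L` that is feasible for some flow `f` still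
has minimum cut at least `n·τ + min f 0` at `f = 0`, while the cut `{s}` bounds it above by
`n·τ`. Since `DP[r][k] ≥ 0` is a supremum that need not be attained, we use that only finitely
many `L` have `|L| ≤ k`: the one maximizing the cut at `f = 0` has cut `≥ n·τ - ε` for every
`ε > 0`, hence exactly `n·τ`. -/

lemma ofReal_le_of_forall_ofReal_sub_le {a : ℝ} {c : ℝ≥0∞} (hc : c ≠ ⊤)
    (h : ∀ ε > 0, ENNReal.ofReal (a - ε) ≤ c) : ENNReal.ofReal a ≤ c := by
  rw [← ENNReal.ofReal_toReal hc]
  refine ENNReal.ofReal_le_ofReal (le_of_forall_sub_le fun ε hε => ?_)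
  have := h ε hε
  rwa [← ENNReal.ofReal_toReal hc, ENNReal.ofReal_le_ofReal_iff ENNReal.toReal_nonneg] at this

lemma ofReal_add_min_le_of_le_add_ofReal {a f : ℝ} {c : ℝ≥0∞}
    (h : ENNReal.ofReal (a + f) ≤ c + ENNReal.ofReal f) :
    ENNReal.ofReal (a + min f 0) ≤ c := by
  rcases le_total f 0 with hf | hf
  · rwa [min_eq_left hf, ← add_zero c, ← ENNReal.ofReal_of_nonpos hf]
  · rw [min_eq_right hf, add_zero, ← add_sub_cancel_right a f, ENNReal.ofReal_sub _ hf]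
    exact tsub_le_iff_right.mpr h

lemma Finset.sum_sum_ite_and_eq {α M : Type*} [DecidableEq α] [AddCommMonoid M]
    (s t : Finset α) (a b : α) (x : M) :
    ∑ u ∈ s, ∑ v ∈ t, (if u = a ∧ v = b then x else 0) = if a ∈ s ∧ b ∈ t then x else 0 := by
  simp only [ite_and, Finset.sum_ite_eq', Finset.sum_ite_irrel, Finset.sum_const_zero]

lemma gadgetW_eq_add {V : Type*} [DecidableEq V] (t : WBT V) (L : Finset V) (τ f : ℝ)
    (u v : V ⊕ Bool) :
    gadgetW t L τ f u v = gadgetW t L τ 0 u v +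
      (if u = Sum.inr true ∧ v = Sum.inl t.root then ENNReal.ofReal f else 0) +
      (if u = Sum.inl t.root ∧ v = Sum.inr true then ENNReal.ofReal (-f) else 0) := by
  rcases u with u | (_ | _) <;> rcases v with v | (_ | _) <;>
    simp [gadgetW]

section Gadget

variable {V : Type*} [Fintype V] [DecidableEq V] (t : WBT V) (L : Finset V) (τ : ℝ)

lemma treeCutE_gadgetW_of_source_mem (f : ℝ) {S : Finset (V ⊕ Bool)}
    (hS : Sum.inr true ∈ S) :
    treeCutE (gadgetW t L τ f) S =
      treeCutE (gadgetW t L τ 0) S + if Sum.inl t.root ∈ S then 0 else ENNReal.ofReal f := by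
  simp only [treeCutE, gadgetW_eq_add t L τ f, Finset.sum_add_distrib,
    Finset.sum_sum_ite_and_eq, Finset.mem_compl]
  split_ifs <;> simp_all

lemma treeCutE_gadgetW_source :
    treeCutE (gadgetW t L τ 0) {Sum.inr true} = ENNReal.ofReal (t.leaves.card * τ) := by
  rw [treeCutE, Finset.sum_singleton,
    Finset.sum_subset (Finset.subset_univ _) fun v _ hv => by simp_all [gadgetW],
    Fintype.sum_sum_type]
  simp [gadgetW, Finset.sum_ite_mem, ENNReal.ofReal_mul (Nat.cast_nonneg _)]

lemma gadgetCut_zero_le :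
    gadgetCut t L τ 0 ≤ ENNReal.ofReal (t.leaves.card * τ) :=
  treeCutE_gadgetW_source t L τ ▸ biInf_le _ (by simp)

lemma ofReal_add_min_le_gadgetCut_zero {f : ℝ} 
    (hf : gadgetCut t L τ f = ENNReal.ofReal (t.leaves.card * τ + f)) :
    ENNReal.ofReal (t.leaves.card * τ + min f 0) ≤ gadgetCut t L τ 0 := by
  refine le_iInf₂ fun S hS => ofReal_add_min_le_of_le_add_ofReal ?_
  have hsrc : Sum.inr true ∈ S := hS.1 (Finset.mem_singleton_self _)
  have hcut : ENNReal.ofReal (t.leaves.card * τ + f) ≤ treeCutE (gadgetW t L τ f) S :=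
    hf ▸ biInf_le _ hS
  rw [treeCutE_gadgetW_of_source_mem t L τ f hsrc] at hcut
  split_ifs at hcut
  · exact hcut.trans (by simp)
  · exact hcut

lemma zero_le_DP_of_gadgetCut_zero_eq {k : ℕ} (hL : L ⊆ t.leaves) (hLk : L.card ≤ k)
    (hcut : gadgetCut t L τ 0 = ENNReal.ofReal (t.leaves.card * τ)) : 0 ≤ DP t τ k :=
  EReal.coe_zero ▸ le_sSup ⟨0, ⟨L, hL, hLk, by rwa [add_zero]⟩, rfl⟩

lemma exists_gadgetCut_zero_eq_of_zero_le_DP {k : ℕ} (hDP : 0 ≤ DP t τ k) :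
    ∃ L ⊆ t.leaves, L.card ≤ k ∧ gadgetCut t L τ 0 = ENNReal.ofReal (t.leaves.card * τ) := by
  set 𝒞 := t.leaves.powerset.filter (·.card ≤ k)
  obtain ⟨L₀, hL₀, hmax⟩ := 𝒞.exists_max_image (gadgetCut t · τ 0) ⟨∅, by simp [𝒞]⟩
  rw [Finset.mem_filter, Finset.mem_powerset] at hL₀
  have hupper := gadgetCut_zero_le t L₀ τ
  refine ⟨L₀, hL₀.1, hL₀.2, hupper.antisymm ?_⟩
  refine ofReal_le_of_forall_ofReal_sub_le (ne_top_of_le_ne_top ENNReal.ofReal_ne_top hupper)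
    fun ε hε => ?_
  have hlt : ((-ε : ℝ) : EReal) < DP t τ k := lt_of_lt_of_le (by exact_mod_cast neg_neg_of_pos hε) hDP
  obtain ⟨_, ⟨g, ⟨L, hL, hLk, hg⟩, rfl⟩, hgε⟩ := lt_sSup_iff.mp hlt
  have hgε : -ε < g := EReal.coe_lt_coe_iff.mp hgε
  calc ENNReal.ofReal (t.leaves.card * τ - ε)
      ≤ ENNReal.ofReal (t.leaves.card * τ + min g 0) :=
        ENNReal.ofReal_le_ofReal (by linarith [le_min hgε.le (neg_nonpos.mpr hε.le)])
    _ ≤ gadgetCut t L τ 0 := ofReal_add_min_le_gadgetCut_zero t L τ hg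
    _ ≤ gadgetCut t L₀ τ 0 := hmax L (by simp [𝒞, hL, hLk])

end Gadget

theorem stmt19_general {V : Type*} [Fintype V] [DecidableEq V]
    (t : WBT V) (τ : ℝ) :
    sInf {k : ℕ | ∃ L : Finset V, L ⊆ t.leaves ∧ L.card ≤ k ∧
        gadgetCut t L τ 0 = ENNReal.ofReal ((t.leaves.card : ℝ) * τ)} =
    sInf {k : ℕ | (0 : EReal) ≤ DP t τ k} := by
  congr 1
  ext k
  exact ⟨fun ⟨L, hL, hLk, hcut⟩ => zero_le_DP_of_gadgetCut_zero_eq t L τ hL hLk hcut,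
    exists_gadgetCut_zero_eq_of_zero_le_DP t τ⟩

/-- recovering the optimum of sink selection from the DP.  For a rooted binary
tree `t` with `n` leaves, the minimum budget `k*` for which some `L ⊆ leaves(t)` with
`|L| ≤ k*` achieves max `s`-`t` flow `n·τ` in `T_{L,τ}` (which is the gadget with injected
flow `f = 0`) equals the smallest `k` with `DP[root][k] ≥ 0`. -/
theorem stmt19 {V : Type*} [Fintype V] [DecidableEq V]
    (t : WBT V) (hnd : t.vertList.Nodup) (τ : ℝ) (hτ : 0 ≤ τ) :
    sInf {k : ℕ | ∃ L : Finset V, L ⊆ t.leaves ∧ L.card ≤ k ∧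
        gadgetCut t L τ 0 = ENNReal.ofReal ((t.leaves.card : ℝ) * τ)} =
    sInf {k : ℕ | (0 : EReal) ≤ DP t τ k} :=
  stmt19_general t τ
end
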